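/- arXiv:2307.01285 — 5 statements merged into one kernel-verified Lean document; each statement's English description precedes it below -/
import Mathlib

section
/- For set functions g₁, …, g_t from 2^U to a commutative ring R, the zeta transform of their cover product equals the pointwise product of their zeta transforms: for every X ⊆ U, (ξ(g₁ ∗_c g₂ ∗_c ⋯ ∗_c g_t))(X) = (ξg₁)(X) · (ξg₂)(X) ⋯ (ξg_t)(X). -/
open Finset

theorem Fintype.piFinset_const_powerset_eq_filter_biUnion_mem_powerset
    {ι U : Type*} [DecidableEq ι] [Fintype ι] [Fintype U] [DecidableEq U] (X : Finset U) :
    Fintype.piFinset (fun _ : ι => X.powerset) =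
      ({Xs | univ.biUnion Xs ∈ X.powerset} : Finset (ι → Finset U)) := by
  ext Xs
  simp

/-- The zeta transform of the cover product of set functions `g₁, …, g_t` equals the
pointwise product of their zeta transforms. -/
theorem zeta_cover_product {U R : Type*} [Fintype U] [DecidableEq U] [CommRing R]
    (t : ℕ) (g : Fin t → Finset U → R) (X : Finset U) :
    ∑ Y ∈ X.powerset,
      ∑ Xs ∈ (Finset.univ : Finset (Fin t → Finset U)).filter
          (fun Xs => Finset.univ.biUnion Xs = Y),
        ∏ j, g j (Xs j)
    = ∏ j, ∑ A ∈ X.powerset, g j A := by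
  rw [sum_fiberwise_eq_sum_filter, prod_univ_sum,
    Fintype.piFinset_const_powerset_eq_filter_biUnion_mem_powerset]
end

section
/- Let n ≥ 1 and let 𝒜 be a nonempty family of subsets of [n]. If each weight ω(i) for i ∈ [n] is chosen uniformly and independently at random from {1, …, 2n}, then with probability at least 1/2 there is a unique set S ∈ 𝒜 minimizing ω(S) = ∑_{i ∈ S} ω(i). -/
/-!
Call `i` singular for a weight vector `w` if some minimum-weight set of `𝒜` contains `i` and
another avoids it; without a unique minimizer some `i` is singular. If `i` is singular for two
weight vectors agreeing off `i`, they agree at `i` as well: the minimum over sets avoiding `i`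
does not see `w i`, while a minimizer through `i` pins `w i` down against it. So for each `i` the
weight of `i` is determined by the others, at most `(2n)^(n-1)` of the `(2n)^n` weight vectors
make `i` singular, and the union bound over the `n` elements leaves at least half isolating.
-/

open Finset

section IsolationLemma

variable {α β M : Type*} [AddCommMonoid M] [LinearOrder M] (𝒜 : Finset (Finset α))

def IsMinWeight (w : α → M) (S : Finset α) : Prop :=
  S ∈ 𝒜 ∧ ∀ T ∈ 𝒜, ∑ i ∈ S, w i ≤ ∑ i ∈ T, w i

def IsSingular (w : α → M) (i : α) : Prop :=
  (∃ S, IsMinWeight 𝒜 w S ∧ i ∈ S) ∧ ∃ T, IsMinWeight 𝒜 w T ∧ i ∉ T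

variable {𝒜}

theorem exists_isSingular_of_not_existsUnique {w : α → M} (h𝒜 : 𝒜.Nonempty)
    (h : ¬ ∃! S, IsMinWeight 𝒜 w S) : ∃ i, IsSingular 𝒜 w i := by
  obtain ⟨S, hS, hSmin⟩ := exists_min_image 𝒜 (fun S => ∑ i ∈ S, w i) h𝒜
  have hSw : IsMinWeight 𝒜 w S := ⟨hS, hSmin⟩
  obtain ⟨T, hTw, hTS⟩ : ∃ T, IsMinWeight 𝒜 w T ∧ T ≠ S := by
    by_contra! hc
    exact h ⟨S, hSw, hc⟩
  obtain ⟨i, hi⟩ : ∃ i, ¬ (i ∈ T ↔ i ∈ S) := by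
    by_contra! hc
    exact hTS (ext hc)
  by_cases hiT : i ∈ T
  · exact ⟨i, ⟨T, hTw, hiT⟩, S, hSw, by tauto⟩
  · exact ⟨i, ⟨S, hSw, by tauto⟩, T, hTw, hiT⟩

variable [IsOrderedCancelAddMonoid M] [DecidableEq α]

theorem IsMinWeight.apply_le_of_forall_ne {w₁ w₂ : α → M} {S T : Finset α} {i : α}
    (hS : IsMinWeight 𝒜 w₁ S) (hiS : i ∈ S) (hT : IsMinWeight 𝒜 w₂ T) (hiT : i ∉ T)
    (hw : ∀ j ≠ i, w₁ j = w₂ j) : w₁ i ≤ w₂ i := by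
  have hrest : ∑ j ∈ S.erase i, w₁ j = ∑ j ∈ S.erase i, w₂ j :=
    sum_congr rfl fun j hj => hw j (ne_of_mem_erase hj)
  have hST : w₁ i + ∑ j ∈ S.erase i, w₁ j ≤ w₂ i + ∑ j ∈ S.erase i, w₁ j :=
    calc w₁ i + ∑ j ∈ S.erase i, w₁ j = ∑ j ∈ S, w₁ j := add_sum_erase S w₁ hiS
      _ ≤ ∑ j ∈ T, w₁ j := hS.2 T hT.1
      _ = ∑ j ∈ T, w₂ j := sum_congr rfl fun j hj => hw j (ne_of_mem_of_not_mem hj hiT)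
      _ ≤ ∑ j ∈ S, w₂ j := hT.2 S hS.1
      _ = w₂ i + ∑ j ∈ S.erase i, w₁ j := by rw [hrest, add_sum_erase S w₂ hiS]
  exact le_of_add_le_add_right hST

theorem IsSingular.eq_of_forall_ne {w₁ w₂ : α → M} {i : α} (h₁ : IsSingular 𝒜 w₁ i)
    (h₂ : IsSingular 𝒜 w₂ i) (hw : ∀ j ≠ i, w₁ j = w₂ j) : w₁ i = w₂ i := by
  obtain ⟨⟨S₁, hS₁, hiS₁⟩, T₁, hT₁, hiT₁⟩ := h₁
  obtain ⟨⟨S₂, hS₂, hiS₂⟩, T₂, hT₂, hiT₂⟩ := h₂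
  exact le_antisymm (hS₁.apply_le_of_forall_ne hiS₁ hT₂ hiT₂ hw)
    (hS₂.apply_le_of_forall_ne hiS₂ hT₁ hiT₁ fun j hj => (hw j hj).symm)

variable [Fintype α] [Fintype β] {f : β → M}

open Classical in
theorem card_filter_isSingular_le (hf : Function.Injective f) (i : α) :
    #{ω : α → β | IsSingular 𝒜 (f ∘ ω) i} ≤ Fintype.card β ^ (Fintype.card α - 1) := by
  have hcard : Fintype.card ({j // j ≠ i} → β) = Fintype.card β ^ (Fintype.card α - 1) := by
    rw [Fintype.card_fun, Fintype.card_subtype_compl, Fintype.card_subtype_eq]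
  rw [← hcard, ← card_univ]
  refine card_le_card_of_injOn (fun ω j => ω j) (fun _ _ => mem_coe.2 (mem_univ _)) ?_
  intro ω₁ h₁ ω₂ h₂ he
  simp only [coe_filter, mem_univ, true_and, Set.mem_ofPred_eq] at h₁ h₂
  have hne : ∀ j ≠ i, ω₁ j = ω₂ j := fun j hj => congrFun he ⟨j, hj⟩
  funext j
  by_cases hj : j = i
  · subst hj
    exact hf (h₁.eq_of_forall_ne h₂ fun k hk => congrArg f (hne k hk))
  · exact hne j hj

open Classical in
theorem card_le_card_filter_existsUnique_isMinWeight_add (hf : Function.Injective f)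
    (h𝒜 : 𝒜.Nonempty) :
    Fintype.card β ^ Fintype.card α ≤ #{ω : α → β | ∃! S, IsMinWeight 𝒜 (f ∘ ω) S} +
      Fintype.card α * Fintype.card β ^ (Fintype.card α - 1) := by
  have hbad : #{ω : α → β | ¬ ∃! S, IsMinWeight 𝒜 (f ∘ ω) S} ≤
      Fintype.card α * Fintype.card β ^ (Fintype.card α - 1) :=
    calc #{ω : α → β | ¬ ∃! S, IsMinWeight 𝒜 (f ∘ ω) S}
        ≤ #((univ : Finset α).biUnion fun i => {ω : α → β | IsSingular 𝒜 (f ∘ ω) i}) := by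
          refine card_le_card fun ω hω => ?_
          obtain ⟨i, hi⟩ := exists_isSingular_of_not_existsUnique h𝒜 (mem_filter.1 hω).2
          exact mem_biUnion.2 ⟨i, mem_univ i, mem_filter.2 ⟨mem_univ ω, hi⟩⟩
      _ ≤ Fintype.card α * Fintype.card β ^ (Fintype.card α - 1) :=
          card_biUnion_le_card_mul _ _ _ fun i _ => card_filter_isSingular_le hf i
  have htotal : #{ω : α → β | ∃! S, IsMinWeight 𝒜 (f ∘ ω) S} +
      #{ω : α → β | ¬ ∃! S, IsMinWeight 𝒜 (f ∘ ω) S} = Fintype.card β ^ Fintype.card α := by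
    rw [card_filter_add_card_filter_not, card_univ, Fintype.card_fun]
  omega

end IsolationLemma

open Classical in
/-- Isolation Lemma (Mulmuley–Vazirani–Vazirani): if each weight `ω(i)` is chosen
uniformly and independently from `{1, …, 2n}`, then with probability at least `1/2`
there is a unique set in the nonempty family `𝒜` of minimum total weight. -/
theorem isolation_lemma (n : ℕ) (hn : 1 ≤ n) (𝒜 : Finset (Finset (Fin n)))
    (h𝒜 : 𝒜.Nonempty) :
    Fintype.card (Fin n → Fin (2 * n)) ≤
      2 * (Finset.univ.filter (fun ω : Fin n → Fin (2 * n) =>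
        ∃! S, S ∈ 𝒜 ∧ ∀ T ∈ 𝒜,
          ∑ i ∈ S, ((ω i : ℕ) + 1) ≤ ∑ i ∈ T, ((ω i : ℕ) + 1))).card := by
  have key := card_le_card_filter_existsUnique_isMinWeight_add
    (f := fun v : Fin (2 * n) => (v : ℕ) + 1) ((add_left_injective 1).comp Fin.val_injective) h𝒜
  have hcard : (2 * n) ^ n = 2 * (n * (2 * n) ^ (n - 1)) := by
    rw [← mul_pow_sub_one (by omega) (2 * n), mul_assoc]
  simp only [IsMinWeight, Function.comp_apply, Fintype.card_fin, hcard] at key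
  rw [Fintype.card_fun, Fintype.card_fin, Fintype.card_fin, hcard]
  omega
end

section
/- Let G be a graph, T ⊆ V(G) a set with T not a dominating set of G, and let F' and X' be fixed disjoint subsets of V(G) ∖ (T ∪ U), where U is the (nonempty) set of vertices not in the closed neighborhood of T. Then the number of ordered partitions (T, F, X) of V(G) with no edges between T and F extending (T, F', X') (meaning F ∖ U = F' and X ∖ U = X' after removing U) is exactly 2^{|U|}, which is even. -/
/-! Outside `U` an extension `(F, X)` is pinned down to `(F', X')`, and a vertex of `U` has no
neighbour in `T`, so it may go to `F` or to `X` freely. Hence `(F, X) ↦ F ∩ U` is a bijection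
from the extensions onto the subsets of `U`, with inverse `S ↦ (F' ∪ S, X' ∪ (U \ S))`. -/

namespace Finset

variable {α : Type*} [DecidableEq α] {F X F' U S : Finset α}

theorem union_sdiff_eq_left_of_subset (hF'U : Disjoint F' U) (hS : S ⊆ U) :
    (F' ∪ S) \ U = F' := by
  rw [union_sdiff_distrib, sdiff_eq_self_of_disjoint hF'U, sdiff_eq_empty_iff_subset.2 hS,
    union_empty]

theorem union_inter_eq_right_of_subset (hF'U : Disjoint F' U) (hS : S ⊆ U) :
    (F' ∪ S) ∩ U = S := by
  rw [union_inter_distrib_right, disjoint_iff_inter_eq_empty.1 hF'U, empty_union,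
    inter_eq_left.2 hS]

theorem inter_eq_sdiff_inter_of_disjoint (hFX : Disjoint F X) (hU : U ⊆ F ∪ X) :
    X ∩ U = U \ (F ∩ U) := by
  ext v
  simp only [mem_inter, mem_sdiff]
  have := @hU v
  have := @disjoint_left.1 hFX v
  simp only [mem_union] at *
  tauto

end Finset

section

open Finset

variable {V : Type*} [DecidableEq V] {G : SimpleGraph V} {T F' X' U S : Finset V}

theorem extend_mem_extensions [Fintype V] (hTU : Disjoint T U)
    (hTUadj : ∀ u ∈ T, ∀ v ∈ U, ¬ G.Adj u v) (hF'X' : Disjoint F' X')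
    (hF' : Disjoint F' (T ∪ U)) (hX' : Disjoint X' (T ∪ U))
    (hcov : T ∪ U ∪ F' ∪ X' = univ) (hTF' : ∀ u ∈ T, ∀ v ∈ F', ¬ G.Adj u v) (hS : S ⊆ U) :
    Disjoint T (F' ∪ S) ∧ Disjoint T (X' ∪ (U \ S)) ∧ Disjoint (F' ∪ S) (X' ∪ (U \ S)) ∧
      T ∪ (F' ∪ S) ∪ (X' ∪ (U \ S)) = univ ∧ (∀ u ∈ T, ∀ v ∈ F' ∪ S, ¬ G.Adj u v) ∧
      (F' ∪ S) \ U = F' ∧ (X' ∪ (U \ S)) \ U = X' := by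
  rw [disjoint_union_right] at hF' hX'
  refine ⟨?_, ?_, ?_, ?_, ?_, union_sdiff_eq_left_of_subset hF'.2 hS,
    union_sdiff_eq_left_of_subset hX'.2 sdiff_subset⟩
  · exact disjoint_union_right.2 ⟨hF'.1.symm, hTU.mono_right hS⟩
  · exact disjoint_union_right.2 ⟨hX'.1.symm, hTU.mono_right sdiff_subset⟩
  · exact disjoint_union_right.2 ⟨disjoint_union_left.2 ⟨hF'X', (hX'.2.mono_right hS).symm⟩,
      disjoint_union_left.2 ⟨hF'.2.mono_right sdiff_subset, disjoint_sdiff⟩⟩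
  · rw [← hcov, ← union_sdiff_of_subset hS]
    ext v
    simp only [mem_union, mem_sdiff]
    tauto
  · exact fun u hu v hv => (mem_union.1 hv).elim (hTF' u hu v) (hTUadj u hu v ∘ @hS v)

theorem extension_eq_extend_inter [Fintype V] {F X : Finset V} (hTU : Disjoint T U)
    (hFX : Disjoint F X) (hcov : T ∪ F ∪ X = univ) (hF : F \ U = F') (hX : X \ U = X') :
    (F' ∪ F ∩ U, X' ∪ (U \ (F ∩ U))) = (F, X) := by
  have hUFX : U ⊆ F ∪ X := fun v hv => by
    have : v ∈ T ∪ F ∪ X := hcov ▸ mem_univ v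
    rw [union_assoc, mem_union] at this
    exact this.resolve_left (disjoint_right.1 hTU hv)
  rw [← inter_eq_sdiff_inter_of_disjoint hFX hUFX, ← hF, ← hX, sdiff_union_inter,
    sdiff_union_inter]

end

open Classical in
theorem extensions_card_general {V : Type*} [Fintype V] [DecidableEq V] (G : SimpleGraph V)
    (T F' X' U : Finset V)
    (hU : U = Finset.univ.filter (fun v => v ∉ T ∧ ∀ u ∈ T, ¬ G.Adj u v))
    (hF'X' : Disjoint F' X')
    (hF' : F' ⊆ Finset.univ \ (T ∪ U)) (hX' : X' ⊆ Finset.univ \ (T ∪ U))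
    (hcov : T ∪ U ∪ F' ∪ X' = Finset.univ)
    (hTF' : ∀ u ∈ T, ∀ v ∈ F', ¬ G.Adj u v) :
    ((Finset.univ : Finset (Finset V × Finset V)).filter (fun FX =>
        Disjoint T FX.1 ∧ Disjoint T FX.2 ∧ Disjoint FX.1 FX.2 ∧
        T ∪ FX.1 ∪ FX.2 = Finset.univ ∧
        (∀ u ∈ T, ∀ v ∈ FX.1, ¬ G.Adj u v) ∧
        FX.1 \ U = F' ∧ FX.2 \ U = X')).card = 2 ^ U.card := by
  have hUT : ∀ v ∈ U, v ∉ T ∧ ∀ u ∈ T, ¬ G.Adj u v := fun v hv => by simpa [hU] using hv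
  have hTU : Disjoint T U := Finset.disjoint_right.2 fun v hv => (hUT v hv).1
  have hF'TU : Disjoint F' (T ∪ U) := (Finset.subset_sdiff.1 hF').2
  have hX'TU : Disjoint X' (T ∪ U) := (Finset.subset_sdiff.1 hX').2
  rw [← Finset.card_powerset U]
  refine Finset.card_nbij' (fun FX => FX.1 ∩ U) (fun S => (F' ∪ S, X' ∪ (U \ S))) ?_ ?_ ?_ ?_
  · exact fun FX _ => by simp
  · intro S hS
    simpa using extend_mem_extensions hTU (fun u hu v hv => (hUT v hv).2 u hu) hF'X' hF'TU
      hX'TU hcov hTF' (Finset.mem_powerset.1 hS)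
  · rintro ⟨F, X⟩ hFX
    simp only [Finset.coe_filter, Finset.mem_univ, true_and, Set.mem_ofPred_eq] at hFX
    obtain ⟨-, -, hFX, hcovFX, -, hF, hX⟩ := hFX
    exact extension_eq_extend_inter hTU hFX hcovFX hF hX
  · intro S hS
    exact Finset.union_inter_eq_right_of_subset (Finset.disjoint_union_right.1 hF'TU).2
      (Finset.mem_powerset.1 hS)

open Classical in
/-- If `T` is not a dominating set, `U` is the (nonempty) set of vertices outside the
closed neighborhood of `T`, and `F', X'` are fixed disjoint sets partitioning
`V ∖ (T ∪ U)` with no edges between `T` and `F'`, then the number of ordered partitions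
`(T, F, X)` of `V(G)` with no edges between `T` and `F` satisfying `F ∖ U = F'` and
`X ∖ U = X'` is exactly `2^{|U|}`, an even number. -/
theorem extensions_card {V : Type*} [Fintype V] [DecidableEq V] (G : SimpleGraph V)
    (T F' X' U : Finset V)
    (hU : U = Finset.univ.filter (fun v => v ∉ T ∧ ∀ u ∈ T, ¬ G.Adj u v))
    (hdom : ¬ ∀ v, v ∉ T → ∃ u ∈ T, G.Adj u v)
    (hF'X' : Disjoint F' X')
    (hF' : F' ⊆ Finset.univ \ (T ∪ U)) (hX' : X' ⊆ Finset.univ \ (T ∪ U))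
    (hcov : T ∪ U ∪ F' ∪ X' = Finset.univ)
    (hTF' : ∀ u ∈ T, ∀ v ∈ F', ¬ G.Adj u v) :
    ((Finset.univ : Finset (Finset V × Finset V)).filter (fun FX =>
        Disjoint T FX.1 ∧ Disjoint T FX.2 ∧ Disjoint FX.1 FX.2 ∧
        T ∪ FX.1 ∪ FX.2 = Finset.univ ∧
        (∀ u ∈ T, ∀ v ∈ FX.1, ¬ G.Adj u v) ∧
        FX.1 \ U = F' ∧ FX.2 \ U = X')).card = 2 ^ U.card :=
  extensions_card_general G T F' X' U hU hF'X' hF' hX' hcov hTF'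
end

section
/- The number of dominating sets of size c in a graph G is congruent modulo 2 to the number of ordered partitions (T, F, X) of V(G) with |T| = c and no edges between T and F. -/
open Classical in
/-- The number of dominating sets of size `c` in a graph `G` is congruent modulo 2 to
the number of ordered partitions `(T, F, X)` of `V(G)` with `|T| = c` and no edges
between `T` and `F`. -/
theorem domsets_mod_two {V : Type*} [Fintype V] [DecidableEq V] (G : SimpleGraph V)
    (c : ℕ) :
    ((Finset.univ : Finset (Finset V)).filter (fun T =>
        T.card = c ∧ ∀ v, v ∉ T → ∃ u ∈ T, G.Adj u v)).card % 2 =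
    ((Finset.univ : Finset (Finset V × Finset V × Finset V)).filter (fun P =>
        P.1.card = c ∧ Disjoint P.1 P.2.1 ∧ Disjoint P.1 P.2.2 ∧ Disjoint P.2.1 P.2.2 ∧
        P.1 ∪ P.2.1 ∪ P.2.2 = Finset.univ ∧
        ∀ u ∈ P.1, ∀ v ∈ P.2.1, ¬ G.Adj u v)).card % 2 := by
  classical
  apply (ZMod.natCast_eq_natCast_iff _ _ 2).mp
  set S : Finset (Finset V × Finset V × Finset V) :=
    (Finset.univ : Finset (Finset V × Finset V × Finset V)).filter (fun P =>
        P.1.card = c ∧ Disjoint P.1 P.2.1 ∧ Disjoint P.1 P.2.2 ∧ Disjoint P.2.1 P.2.2 ∧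
        P.1 ∪ P.2.1 ∪ P.2.2 = Finset.univ ∧
        ∀ u ∈ P.1, ∀ v ∈ P.2.1, ¬ G.Adj u v) with hS
  have hfib : S.card = ∑ T ∈ (Finset.univ : Finset (Finset V)),
      (S.filter (fun P => P.1 = T)).card :=
    Finset.card_eq_sum_card_fiberwise (fun x _ => Finset.mem_univ _)
  rw [hfib, Finset.card_filter]
  push_cast
  apply Finset.sum_congr rfl
  intro T _
  set U : Finset V := Finset.univ.filter (fun v => v ∉ T ∧ ∀ u ∈ T, ¬ G.Adj u v) with hU
  by_cases hc : T.card = c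
  · have hcard : (S.filter (fun P => P.1 = T)).card = U.powerset.card := by
      apply Finset.card_bij' (fun P _ => P.2.1) (fun F _ => (T, F, (T ∪ F)ᶜ))
      · intro P hP
        simp only [hS, Finset.mem_filter, Finset.mem_univ, true_and] at hP
        obtain ⟨⟨_, h1, h2, h3, h4, h5⟩, hPT⟩ := hP
        rw [Finset.mem_powerset]
        intro v hv
        simp only [hU, Finset.mem_filter, Finset.mem_univ, true_and]
        refine ⟨fun hvT => Finset.disjoint_left.mp h1 (hPT ▸ hvT) hv, fun u hu => ?_⟩
        exact h5 u (hPT ▸ hu) v hv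
      · intro F hF
        rw [Finset.mem_powerset] at hF
        have hFT : Disjoint T F := by
          rw [Finset.disjoint_left]
          intro a ha haF
          have := hF haF
          simp only [hU, Finset.mem_filter] at this
          exact this.2.1 ha
        simp only [hS, Finset.mem_filter, Finset.mem_univ, true_and]
        refine ⟨⟨hc, hFT, ?_, ?_, ?_, ?_⟩, by trivial⟩
        · rw [Finset.disjoint_left]
          intro a ha hb
          rw [Finset.mem_compl] at hb
          exact hb (Finset.mem_union_left _ ha)
        · rw [Finset.disjoint_left]
          intro a ha hb
          rw [Finset.mem_compl] at hb
          exact hb (Finset.mem_union_right _ ha)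
        · exact Finset.union_compl _
        · intro u hu v hv
          have := hF hv
          simp only [hU, Finset.mem_filter] at this
          exact this.2.2 u hu
      · intro P hP
        simp only [hS, Finset.mem_filter, Finset.mem_univ, true_and] at hP
        obtain ⟨⟨_, h1, h2, h3, h4, h5⟩, hPT⟩ := hP
        have hX : (P.1 ∪ P.2.1)ᶜ = P.2.2 := by
          ext v
          simp only [Finset.mem_compl, Finset.mem_union]
          constructor
          · intro h
            push_neg at h
            have hv : v ∈ P.1 ∪ P.2.1 ∪ P.2.2 := h4 ▸ Finset.mem_univ v
            simp only [Finset.mem_union] at hv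
            tauto
          · intro h
            push_neg
            exact ⟨fun h1' => Finset.disjoint_left.mp h2 h1' h,
                   fun h2' => Finset.disjoint_left.mp h3 h2' h⟩
        rw [hPT] at hX
        rw [hX, ← hPT]
      · intro F hF
        rfl
    rw [hcard, Finset.card_powerset]
    by_cases hdom : ∀ v, v ∉ T → ∃ u ∈ T, G.Adj u v
    · have hUe : U = ∅ := by
        rw [Finset.eq_empty_iff_forall_notMem]
        intro v hv
        simp only [hU, Finset.mem_filter, Finset.mem_univ, true_and] at hv
        obtain ⟨u, hu, hadj⟩ := hdom v hv.1
        exact hv.2 u hu hadj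
      rw [hUe, Finset.card_empty, pow_zero, if_pos ⟨hc, hdom⟩, Nat.cast_one]
    · have hUne : U.card ≠ 0 := by
        rw [Finset.card_ne_zero, Finset.nonempty_iff_ne_empty]
        intro h
        apply hdom
        intro v hvT
        by_contra hno
        push_neg at hno
        have : v ∈ U := by
          simp only [hU, Finset.mem_filter, Finset.mem_univ, true_and]
          exact ⟨hvT, fun u hu => hno u hu⟩
        rw [h] at this
        exact absurd this (Finset.notMem_empty v)
      push_cast
      have h2 : (2 : ZMod 2) = 0 := by decide
      rw [h2, zero_pow hUne, if_neg (fun h => hdom h.2)]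
  · have hemp : (S.filter (fun P => P.1 = T)) = ∅ := by
      rw [Finset.eq_empty_iff_forall_notMem]
      intro P hP
      simp only [hS, Finset.mem_filter, Finset.mem_univ, true_and] at hP
      exact hc (hP.2 ▸ hP.1.1)
    rw [hemp]
    simp [hc]
end

section
/- Let U be a finite set, t ≥ 1, and g₁, …, g_t : 2^U → R set functions into a commutative ring. Then for every S ⊆ U, ∑_{X₁ ∪ ⋯ ∪ X_t = S} g₁(X₁)⋯g_t(X_t) = ∑_{Y ⊆ S} (−1)^{|S∖Y|} ∏_{j=1}^t (∑_{Z ⊆ Y} g_j(Z)). -/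
/-!
The zeta transform `f ↦ (Y ↦ ∑_{Z ⊆ Y} f Z)` turns the cover product into the pointwise product,
since a tuple has union inside `Y` exactly when each of its members lies inside `Y`. The right-hand
side is therefore the Möbius inversion of the zeta transform of the cover product, and Möbius
inversion on the Boolean lattice holds because `∑_{Z ⊆ Y ⊆ S} (-1)^{|S \ Y|}` vanishes unless `Z = S`.
-/

open Finset

section PowersetInversion

variable {U R : Type*} [DecidableEq U] [Ring R]

theorem sum_powerset_neg_one_pow_card_eq_ite (A : Finset U) :
    ∑ W ∈ A.powerset, (-1 : R) ^ #W = if A = ∅ then 1 else 0 := by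
  simpa [apply_ite (Int.cast : ℤ → R)] using
    congrArg (Int.cast : ℤ → R) (sum_powerset_neg_one_pow_card (x := A))

theorem sum_Icc_neg_one_pow_card_sdiff {Z S : Finset U} (hZS : Z ⊆ S) :
    ∑ Y ∈ Icc Z S, (-1 : R) ^ #(S \ Y) = if Z = S then 1 else 0 := by
  have hreindex : ∑ Y ∈ Icc Z S, (-1 : R) ^ #(S \ Y) = ∑ W ∈ (S \ Z).powerset, (-1 : R) ^ #W :=
    sum_nbij' (S \ ·) (S \ ·)
      (fun Y hY => mem_powerset.2 (sdiff_subset_sdiff le_rfl (mem_Icc.1 hY).1))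
      (fun W hW => mem_Icc.2
        ⟨subset_sdiff.2 ⟨hZS, disjoint_sdiff.mono_right (mem_powerset.1 hW)⟩, sdiff_subset⟩)
      (fun Y hY => Finset.sdiff_sdiff_eq_self (mem_Icc.1 hY).2)
      (fun W hW => Finset.sdiff_sdiff_eq_self ((mem_powerset.1 hW).trans sdiff_subset))
      fun _ _ => rfl
  simp only [hreindex, sum_powerset_neg_one_pow_card_eq_ite, sdiff_eq_empty_iff_subset,
    hZS.ge_iff_eq]

theorem moebius_inversion_powerset (f : Finset U → R) (S : Finset U) :
    ∑ Y ∈ S.powerset, (-1 : R) ^ #(S \ Y) * ∑ Z ∈ Y.powerset, f Z = f S :=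
  calc ∑ Y ∈ S.powerset, (-1 : R) ^ #(S \ Y) * ∑ Z ∈ Y.powerset, f Z
      = ∑ Z ∈ S.powerset, ∑ Y ∈ Icc Z S, (-1 : R) ^ #(S \ Y) * f Z := by
        simp_rw [mul_sum]
        refine sum_comm' fun Y Z => ?_
        simp only [mem_powerset, mem_Icc]
        exact ⟨fun ⟨hYS, hZY⟩ => ⟨⟨hZY, hYS⟩, hZY.trans hYS⟩, fun ⟨⟨hZY, hYS⟩, _⟩ => ⟨hYS, hZY⟩⟩
    _ = ∑ Z ∈ S.powerset, if Z = S then f Z else 0 := by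
        refine sum_congr rfl fun Z hZ => ?_
        rw [← sum_mul, sum_Icc_neg_one_pow_card_sdiff (mem_powerset.1 hZ), ite_mul, one_mul,
          zero_mul]
    _ = f S := by simp

end PowersetInversion

section CoverProduct

variable {U R ι : Type*} [DecidableEq U] [Fintype U] [CommSemiring R] [Fintype ι] [DecidableEq ι]

def coverProduct (g : ι → Finset U → R) (S : Finset U) : R :=
  ∑ Xs ∈ (univ : Finset (ι → Finset U)).filter (fun Xs => univ.biUnion Xs = S), ∏ i, g i (Xs i)

theorem sum_powerset_coverProduct (g : ι → Finset U → R) (Y : Finset U) :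
    ∑ T ∈ Y.powerset, coverProduct g T = ∏ i, ∑ Z ∈ Y.powerset, g i Z := by
  have hpi : (univ : Finset (ι → Finset U)).filter (fun Xs => univ.biUnion Xs ⊆ Y) =
      Fintype.piFinset fun _ => Y.powerset := by
    ext Xs
    simp
  rw [prod_univ_sum, ← hpi, sum_filter]
  simp only [coverProduct, sum_filter]
  rw [sum_comm]
  simp

end CoverProduct

theorem cover_product_inclusion_exclusion_general {U R : Type*} [Fintype U] [DecidableEq U]
    [CommRing R] (t : ℕ) (g : Fin t → Finset U → R) (S : Finset U) :
    ∑ Xs ∈ (Finset.univ : Finset (Fin t → Finset U)).filter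
        (fun Xs => Finset.univ.biUnion Xs = S),
      ∏ j, g j (Xs j)
    = ∑ Y ∈ S.powerset, (-1 : R) ^ (S \ Y).card * ∏ j, ∑ Z ∈ Y.powerset, g j Z := by
  simp_rw [← sum_powerset_coverProduct]
  exact (moebius_inversion_powerset (coverProduct g) S).symm

/-- The cover product evaluated at `S` equals the inclusion–exclusion expression:
`∑_{X₁ ∪ ⋯ ∪ X_t = S} g₁(X₁)⋯g_t(X_t)
  = ∑_{Y ⊆ S} (-1)^{|S∖Y|} ∏_j (∑_{Z ⊆ Y} g_j(Z))`. -/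
theorem cover_product_inclusion_exclusion {U R : Type*} [Fintype U] [DecidableEq U]
    [CommRing R] (t : ℕ) (ht : 1 ≤ t) (g : Fin t → Finset U → R) (S : Finset U) :
    ∑ Xs ∈ (Finset.univ : Finset (Fin t → Finset U)).filter
        (fun Xs => Finset.univ.biUnion Xs = S),
      ∏ j, g j (Xs j)
    = ∑ Y ∈ S.powerset, (-1 : R) ^ (S \ Y).card * ∏ j, ∑ Z ∈ Y.powerset, g j Z :=
  cover_product_inclusion_exclusion_general t g S
end
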